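/- (Theorem 1, LASEC mistake bound.) Suppose y_k ∈ {−1, +1} and y_k p̂_k ≤ 0 for every k = 1, …, m (all m rounds are mistaken rounds of LASEC). Then for every γ > 0 and every sequence u_1, …, u_m ∈ ℝ^d: m ≤ (1/γ) Σ_{k=1}^{m} ℓ_{γ,k}(u_k) + (1/γ) √( (b‖u_1‖² + c V_m + Σ_{k=1}^{m} (u_kᵀ x_k)²) · Σ_{k=1}^{m} x_kᵀ D_k^{−1} x_k ). -/

import Mathlib

set_option autoImplicit false

open Matrix Finset

noncomputable section

/-- `D_0 = (bc/(c-b)) I`, `D_k = (D_{k-1}⁻¹ + c⁻¹ I)⁻¹ + x_k x_kᵀ` for `k ≥ 1`. -/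
def lasecD (d : ℕ) (b c : ℝ) (x : ℕ → Fin d → ℝ) : ℕ → Matrix (Fin d) (Fin d) ℝ
  | 0 => (b * c / (c - b)) • (1 : Matrix (Fin d) (Fin d) ℝ)
  | k + 1 => ((lasecD d b c x k)⁻¹ + c⁻¹ • (1 : Matrix (Fin d) (Fin d) ℝ))⁻¹
      + vecMulVec (x (k + 1)) (x (k + 1))

/-- `e_0 = 0`, `e_k = (I + c⁻¹ D_{k-1})⁻¹ e_{k-1} + y_k x_k` for `k ≥ 1`. -/
def lasecE (d : ℕ) (b c : ℝ) (x : ℕ → Fin d → ℝ) (y : ℕ → ℝ) : ℕ → (Fin d → ℝ)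
  | 0 => 0
  | k + 1 => ((1 : Matrix (Fin d) (Fin d) ℝ) + c⁻¹ • lasecD d b c x k)⁻¹ *ᵥ
        lasecE d b c x y k + y (k + 1) • x (k + 1)

/-- The margin `p̂_k = x_kᵀ D_k⁻¹ (I + c⁻¹ D_{k-1})⁻¹ e_{k-1}`. -/
def lasecPhat (d : ℕ) (b c : ℝ) (x : ℕ → Fin d → ℝ) (y : ℕ → ℝ) (k : ℕ) : ℝ :=
  x k ⬝ᵥ ((lasecD d b c x k)⁻¹ *ᵥ
    (((1 : Matrix (Fin d) (Fin d) ℝ) + c⁻¹ • lasecD d b c x (k - 1))⁻¹ *ᵥ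
      lasecE d b c x y (k - 1)))


/-- The hinge loss `ℓ_{γ,k}(u) = max{0, γ - y_k uᵀ x_k}`. -/
def hinge (d : ℕ) (x : ℕ → Fin d → ℝ) (y : ℕ → ℝ) (γ : ℝ) (k : ℕ) (u : Fin d → ℝ) : ℝ :=
  max 0 (γ - y k * (u ⬝ᵥ x k))

/-!
LASEC keeps the potential `Φₖ(v) = vᵀDₖv - 2eₖᵀv + eₖᵀDₖ⁻¹eₖ = ‖v - Dₖ⁻¹eₖ‖²_{Dₖ} ≥ 0`.
The forgetting step `D ↦ (D⁻¹ + c⁻¹I)⁻¹` bounds the new potential at `w` by `Φₖ₋₁(v) + c‖w - v‖²`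
(parallel-sum inequality), and on a mistaken round the rank-one update adds at most
`(wᵀxₖ)² - 2yₖwᵀxₖ + xₖᵀDₖ⁻¹xₖ`, because the inverse decreases and the cross term has the sign of
the margin. Both facts reduce to the Fenchel–Young inequality `2gᵀv ≤ vᵀMv + gᵀM⁻¹g`.
Telescoping gives `2 Σ yₖuₖᵀxₖ ≤ Q(u) + S`, where `Q(u)` is the first factor under the square
root and `S = Σ xₖᵀDₖ⁻¹xₖ`; since `Q` is quadratic, applying this to `λu` and optimising over
`λ > 0` gives `Σ yₖuₖᵀxₖ ≤ √(Q(u) S)`, and the hinge losses bound `mγ - Σ yₖuₖᵀxₖ`.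
-/

namespace Matrix

variable {n : Type*}

lemma IsSymm.dotProduct_mulVec_comm [Fintype n] {α : Type*} [CommSemiring α] {M : Matrix n n α}
    (hM : M.IsSymm) (a b : n → α) : a ⬝ᵥ M *ᵥ b = b ⬝ᵥ M *ᵥ a := by
  rw [dotProduct_mulVec, ← mulVec_transpose, hM.eq, dotProduct_comm]

lemma posSemidef_vecMulVec_self [Fintype n] (a : n → ℝ) : (vecMulVec a a).PosSemidef := by
  simpa using posSemidef_vecMulVec_self_star a

lemma dotProduct_vecMulVec_self_mulVec [Fintype n] (x w : n → ℝ) :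
    w ⬝ᵥ vecMulVec x x *ᵥ w = (w ⬝ᵥ x) ^ 2 := by
  rw [vecMulVec_mulVec, op_smul_eq_smul, dotProduct_smul, smul_eq_mul, dotProduct_comm x, sq]

namespace PosDef

variable {M : Matrix n n ℝ}

lemma isSymm (hM : M.PosDef) : M.IsSymm := isHermitian_iff_isSymm.mp hM.isHermitian

variable [Fintype n] [DecidableEq n]

lemma isUnit_det (hM : M.PosDef) : IsUnit M.det := (isUnit_iff_isUnit_det M).mp hM.isUnit

lemma mulVec_inv_mulVec (hM : M.PosDef) (g : n → ℝ) : M *ᵥ (M⁻¹ *ᵥ g) = g := by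
  rw [mulVec_mulVec, mul_nonsing_inv M hM.isUnit_det, one_mulVec]

lemma inv_mulVec_mulVec (hM : M.PosDef) (g : n → ℝ) : M⁻¹ *ᵥ (M *ᵥ g) = g := by
  rw [mulVec_mulVec, nonsing_inv_mul M hM.isUnit_det, one_mulVec]

end PosDef

end Matrix

open Matrix

variable {n : Type*} [Fintype n] [DecidableEq n]

def fenchelYoungGap (M : Matrix n n ℝ) (g v : n → ℝ) : ℝ :=
  v ⬝ᵥ M *ᵥ v - 2 * (g ⬝ᵥ v) + g ⬝ᵥ M⁻¹ *ᵥ g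

lemma fenchelYoungGap_eq {M : Matrix n n ℝ} (hM : M.PosDef) (g v : n → ℝ) :
    fenchelYoungGap M g v = (v - M⁻¹ *ᵥ g) ⬝ᵥ M *ᵥ (v - M⁻¹ *ᵥ g) := by
  have hsymm : (M⁻¹ *ᵥ g) ⬝ᵥ M *ᵥ v = g ⬝ᵥ v := by
    rw [hM.isSymm.dotProduct_mulVec_comm, hM.mulVec_inv_mulVec, dotProduct_comm]
  simp only [fenchelYoungGap, mulVec_sub, dotProduct_sub, sub_dotProduct, hsymm,
    hM.mulVec_inv_mulVec, dotProduct_comm v g, dotProduct_comm (M⁻¹ *ᵥ g) g]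
  ring

lemma fenchelYoungGap_nonneg {M : Matrix n n ℝ} (hM : M.PosDef) (g v : n → ℝ) :
    0 ≤ fenchelYoungGap M g v := by
  rw [fenchelYoungGap_eq hM]
  simpa only [star_trivial] using hM.posSemidef.dotProduct_mulVec_nonneg _

lemma dotProduct_inv_add_mulVec_le {B C : Matrix n n ℝ} (hB : B.PosDef) (hC : C.PosSemidef)
    (z : n → ℝ) : z ⬝ᵥ (B + C)⁻¹ *ᵥ z ≤ z ⬝ᵥ B⁻¹ *ᵥ z := by
  set v := (B + C)⁻¹ *ᵥ z
  have hv : v ⬝ᵥ B *ᵥ v + v ⬝ᵥ C *ᵥ v = z ⬝ᵥ v := by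
    rw [← dotProduct_add, ← add_mulVec, (hB.add_posSemidef hC).mulVec_inv_mulVec,
      dotProduct_comm]
  have hCv : 0 ≤ v ⬝ᵥ C *ᵥ v := by simpa using hC.dotProduct_mulVec_nonneg v
  have hgap := fenchelYoungGap_nonneg hB z v
  rw [fenchelYoungGap] at hgap
  linarith

lemma dotProduct_inv_add_inv_mulVec_le {A C : Matrix n n ℝ} (hA : A.PosDef) (hC : C.PosDef)
    (a b : n → ℝ) :
    (a + b) ⬝ᵥ (A⁻¹ + C⁻¹)⁻¹ *ᵥ (a + b) ≤ a ⬝ᵥ A *ᵥ a + b ⬝ᵥ C *ᵥ b := by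
  set z := (A⁻¹ + C⁻¹)⁻¹ *ᵥ (a + b)
  have hz : z ⬝ᵥ A⁻¹ *ᵥ z + z ⬝ᵥ C⁻¹ *ᵥ z = z ⬝ᵥ a + z ⬝ᵥ b := by
    rw [← dotProduct_add, ← add_mulVec, (hA.inv.add hC.inv).mulVec_inv_mulVec, dotProduct_add]
  have hgapA := fenchelYoungGap_nonneg hA z a
  have hgapC := fenchelYoungGap_nonneg hC z b
  rw [fenchelYoungGap] at hgapA hgapC
  rw [dotProduct_comm (a + b), dotProduct_add]
  linarith

lemma fenchelYoungGap_add_vecMulVec_le {B : Matrix n n ℝ} (hB : B.PosDef) (x g w : n → ℝ)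
    {y : ℝ} (hy : y ^ 2 = 1) (hmis : y * (x ⬝ᵥ (B + vecMulVec x x)⁻¹ *ᵥ g) ≤ 0) :
    fenchelYoungGap (B + vecMulVec x x) (g + y • x) w
      ≤ fenchelYoungGap B g w + ((w ⬝ᵥ x) ^ 2 - 2 * y * (w ⬝ᵥ x))
        + x ⬝ᵥ (B + vecMulVec x x)⁻¹ *ᵥ x := by
  set D := B + vecMulVec x x
  have hDw : w ⬝ᵥ D *ᵥ w = w ⬝ᵥ B *ᵥ w + (w ⬝ᵥ x) ^ 2 := by
    rw [add_mulVec, dotProduct_add, dotProduct_vecMulVec_self_mulVec]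
  have hsymm : g ⬝ᵥ D⁻¹ *ᵥ x = x ⬝ᵥ D⁻¹ *ᵥ g :=
    (hB.add_posSemidef (posSemidef_vecMulVec_self x)).inv.isSymm.dotProduct_mulVec_comm g x
  have hquad : (g + y • x) ⬝ᵥ D⁻¹ *ᵥ (g + y • x)
      = g ⬝ᵥ D⁻¹ *ᵥ g + 2 * (y * (x ⬝ᵥ D⁻¹ *ᵥ g)) + y ^ 2 * (x ⬝ᵥ D⁻¹ *ᵥ x) := by
    simp only [mulVec_add, mulVec_smul, dotProduct_add, add_dotProduct, dotProduct_smul,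
      smul_dotProduct, smul_eq_mul, hsymm]
    ring
  have hmono : g ⬝ᵥ D⁻¹ *ᵥ g ≤ g ⬝ᵥ B⁻¹ *ᵥ g :=
    dotProduct_inv_add_mulVec_le hB (posSemidef_vecMulVec_self x) g
  simp only [fenchelYoungGap, hDw, hquad, hy, add_dotProduct, smul_dotProduct, smul_eq_mul,
    dotProduct_comm x w]
  linarith

lemma fenchelYoungGap_inv_add_inv_le {A C : Matrix n n ℝ} (hA : A.PosDef) (hC : C.PosDef)
    (e v w : n → ℝ) :
    fenchelYoungGap (A⁻¹ + C⁻¹)⁻¹ ((A⁻¹ + C⁻¹)⁻¹ *ᵥ (A⁻¹ *ᵥ e)) w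
      ≤ fenchelYoungGap A e v + (w - v) ⬝ᵥ C *ᵥ (w - v) := by
  have hP := (hA.inv.add hC.inv).inv
  rw [fenchelYoungGap_eq hP, hP.inv_mulVec_mulVec, fenchelYoungGap_eq hA]
  simpa using dotProduct_inv_add_inv_mulVec_le hA hC (v - A⁻¹ *ᵥ e) (w - v)

lemma fenchelYoungGap_inv_add_smul_one_le {A : Matrix n n ℝ} (hA : A.PosDef) {c : ℝ}
    (hc : 0 < c) (e v w : n → ℝ) :
    fenchelYoungGap (A⁻¹ + c⁻¹ • 1)⁻¹ ((1 + c⁻¹ • A)⁻¹ *ᵥ e) w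
      ≤ fenchelYoungGap A e v + c * ((w - v) ⬝ᵥ (w - v)) := by
  have hC : (c • 1 : Matrix n n ℝ).PosDef := PosDef.one.smul hc
  have hCinv : (c • 1 : Matrix n n ℝ)⁻¹ = c⁻¹ • 1 :=
    inv_eq_left_inv (by rw [smul_mul_smul, Matrix.one_mul, inv_mul_cancel₀ hc.ne', one_smul])
  have hdrift : (A⁻¹ + c⁻¹ • 1)⁻¹ * A⁻¹ = (1 + c⁻¹ • A)⁻¹ := by
    rw [← Matrix.mul_inv_rev, Matrix.mul_add, mul_nonsing_inv A hA.isUnit_det, Matrix.mul_smul,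
      Matrix.mul_one]
  have := fenchelYoungGap_inv_add_inv_le hA hC e v w
  rwa [hCinv, mulVec_mulVec, hdrift, smul_mulVec, one_mulVec, dotProduct_smul,
    smul_eq_mul] at this

lemma Real.le_sqrt_mul_of_forall_two_mul_le {L Q S : ℝ}
    (h : ∀ l > 0, 2 * (l * L) ≤ l ^ 2 * Q + S) : L ≤ √(Q * S) := by
  rcases le_or_gt L 0 with hL | hL
  · exact hL.trans (Real.sqrt_nonneg _)
  rcases le_or_gt Q 0 with hQ | hQ
  · obtain ⟨l, hl, hlL⟩ : ∃ l > 0, 2 * (l * L) = |S| + 1 :=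
      ⟨(|S| + 1) / (2 * L), by positivity, by field_simp⟩
    nlinarith [h l hl, le_abs_self S, mul_nonpos_of_nonneg_of_nonpos (sq_nonneg l) hQ]
  · have := h (L / Q) (div_pos hL hQ)
    rw [Real.le_sqrt' hL]
    field_simp at this
    nlinarith

section Lasec

variable {d : ℕ} {b c : ℝ} (x : ℕ → Fin d → ℝ) (y : ℕ → ℝ)

lemma lasecD_posDef (hb : 0 < b) (hbc : b < c) (k : ℕ) : (lasecD d b c x k).PosDef := by
  induction k with
  | zero => exact PosDef.one.smul (div_pos (by nlinarith) (by linarith))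
  | succ k ih =>
    exact (ih.inv.add (PosDef.one.smul (inv_pos.2 (hb.trans hbc)))).inv.add_posSemidef
      (posSemidef_vecMulVec_self _)

lemma fenchelYoungGap_lasec_succ_le (hb : 0 < b) (hbc : b < c) {k : ℕ} (hy : y (k + 1) ^ 2 = 1)
    (hmis : y (k + 1) * lasecPhat d b c x y (k + 1) ≤ 0) (v w : Fin d → ℝ) :
    fenchelYoungGap (lasecD d b c x (k + 1)) (lasecE d b c x y (k + 1)) w
      ≤ fenchelYoungGap (lasecD d b c x k) (lasecE d b c x y k) v + c * ((w - v) ⬝ᵥ (w - v))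
        + ((w ⬝ᵥ x (k + 1)) ^ 2 - 2 * y (k + 1) * (w ⬝ᵥ x (k + 1)))
        + x (k + 1) ⬝ᵥ (lasecD d b c x (k + 1))⁻¹ *ᵥ x (k + 1) := by
  have hA := lasecD_posDef x hb hbc k
  have hc := hb.trans hbc
  have hB := (hA.inv.add (PosDef.one.smul (inv_pos.2 hc))).inv
  have hrank := fenchelYoungGap_add_vecMulVec_le hB (x (k + 1))
    ((1 + c⁻¹ • lasecD d b c x k)⁻¹ *ᵥ lasecE d b c x y k) w hy hmis
  have hdrift := fenchelYoungGap_inv_add_smul_one_le hA hc (lasecE d b c x y k) v w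
  rw [lasecD, lasecE]
  linarith

/-- `(bc/(c-b))⁻¹ + c⁻¹ = b⁻¹`: the parallel sum of `D₀` and `cI` is `bI`, which is where the
value of `D₀` comes from. -/
lemma fenchelYoungGap_lasec_zero_add (hb : 0 < b) (hbc : b < c) (u : Fin d → ℝ) :
    fenchelYoungGap (lasecD d b c x 0) (lasecE d b c x y 0) ((1 - b / c) • u)
      + c * ((u - (1 - b / c) • u) ⬝ᵥ (u - (1 - b / c) • u)) = b * (u ⬝ᵥ u) := by
  have hc : c ≠ 0 := (hb.trans hbc).ne'
  have hcb : c - b ≠ 0 := sub_ne_zero.2 hbc.ne'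
  have hsub : u - (1 - b / c) • u = (b / c) • u := by
    rw [sub_smul, one_smul, sub_sub_cancel]
  simp only [fenchelYoungGap, lasecD, lasecE, hsub, smul_mulVec, one_mulVec, zero_dotProduct,
    mulVec_zero, dotProduct_zero, smul_dotProduct, dotProduct_smul, smul_eq_mul]
  field_simp
  ring

lemma fenchelYoungGap_lasec_le (hb : 0 < b) (hbc : b < c) (u : ℕ → Fin d → ℝ) {m : ℕ}
    (hy : ∀ k ∈ Icc 1 m, y k = -1 ∨ y k = 1)
    (hmis : ∀ k ∈ Icc 1 m, y k * lasecPhat d b c x y k ≤ 0) {k : ℕ} (hk : 1 ≤ k)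
    (hkm : k ≤ m) :
    fenchelYoungGap (lasecD d b c x k) (lasecE d b c x y k) (u k)
      ≤ b * (u 1 ⬝ᵥ u 1) + c * ∑ j ∈ Icc 2 k, (u j - u (j - 1)) ⬝ᵥ (u j - u (j - 1))
        + ∑ j ∈ Icc 1 k, ((u j ⬝ᵥ x j) ^ 2 - 2 * y j * (u j ⬝ᵥ x j)
          + x j ⬝ᵥ (lasecD d b c x j)⁻¹ *ᵥ x j) := by
  have hy2 : ∀ j, 1 ≤ j → j ≤ m → y j ^ 2 = 1 := fun j hj hjm => by
    rcases hy j (mem_Icc.2 ⟨hj, hjm⟩) with h | h <;> simp [h]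
  induction k, hk using Nat.le_induction with
  | base =>
    have h := fenchelYoungGap_lasec_succ_le x y hb hbc (hy2 1 le_rfl hkm)
      (hmis 1 (mem_Icc.2 ⟨le_rfl, hkm⟩)) ((1 - b / c) • u 1) (u 1)
    rw [Icc_eq_empty (by omega), sum_empty, Icc_self, sum_singleton]
    linarith [fenchelYoungGap_lasec_zero_add x y hb hbc (u 1)]
  | succ k hk ih =>
    have h := fenchelYoungGap_lasec_succ_le x y hb hbc (hy2 (k + 1) (by omega) hkm)
      (hmis (k + 1) (mem_Icc.2 ⟨by omega, hkm⟩)) (u k) (u (k + 1))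
    rw [sum_Icc_succ_top (by omega), sum_Icc_succ_top (by omega), Nat.add_sub_cancel]
    linarith [ih (by omega)]

lemma two_mul_sum_mul_dotProduct_le_lasec (hb : 0 < b) (hbc : b < c) (u : ℕ → Fin d → ℝ)
    {m : ℕ} (hm : 1 ≤ m) (hy : ∀ k ∈ Icc 1 m, y k = -1 ∨ y k = 1)
    (hmis : ∀ k ∈ Icc 1 m, y k * lasecPhat d b c x y k ≤ 0) :
    2 * ∑ k ∈ Icc 1 m, y k * (u k ⬝ᵥ x k)
      ≤ b * ∑ i, u 1 i ^ 2 + c * ∑ k ∈ Icc 2 m, ∑ i, (u k i - u (k - 1) i) ^ 2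
        + ∑ k ∈ Icc 1 m, (u k ⬝ᵥ x k) ^ 2
        + ∑ k ∈ Icc 1 m, x k ⬝ᵥ (lasecD d b c x k)⁻¹ *ᵥ x k := by
  have hgap := fenchelYoungGap_nonneg (lasecD_posDef x hb hbc m) (lasecE d b c x y m) (u m)
  have hle := fenchelYoungGap_lasec_le x y hb hbc u hy hmis hm le_rfl
  have hsq (v : Fin d → ℝ) : v ⬝ᵥ v = ∑ i, v i ^ 2 := by simp only [dotProduct, sq]
  simp only [sum_add_distrib, sum_sub_distrib, mul_assoc, ← mul_sum, hsq, Pi.sub_apply] at hle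
  linarith

end Lasec

theorem lasec_mistake_bound_general (d : ℕ) (b c : ℝ) (hb : 0 < b) (hbc : b < c)
    (m : ℕ) (hm : 1 ≤ m) (x : ℕ → Fin d → ℝ) (y : ℕ → ℝ)
    (hy : ∀ k ∈ Icc 1 m, y k = -1 ∨ y k = 1)
    (hmis : ∀ k ∈ Icc 1 m, y k * lasecPhat d b c x y k ≤ 0)
    (γ : ℝ) (hγ : 0 < γ) (u : ℕ → Fin d → ℝ) :
    (m : ℝ) ≤ (1 / γ) * ∑ k ∈ Icc 1 m, hinge d x y γ k (u k)
      + (1 / γ) * Real.sqrt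
          ((b * (∑ i, (u 1 i) ^ 2)
              + c * ∑ k ∈ Icc 2 m, ∑ i, (u k i - u (k - 1) i) ^ 2
              + ∑ k ∈ Icc 1 m, (u k ⬝ᵥ x k) ^ 2)
            * ∑ k ∈ Icc 1 m, x k ⬝ᵥ ((lasecD d b c x k)⁻¹ *ᵥ x k)) := by
  set L := ∑ k ∈ Icc 1 m, y k * (u k ⬝ᵥ x k)
  set Q := b * (∑ i, (u 1 i) ^ 2) + c * ∑ k ∈ Icc 2 m, ∑ i, (u k i - u (k - 1) i) ^ 2
    + ∑ k ∈ Icc 1 m, (u k ⬝ᵥ x k) ^ 2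
  set S := ∑ k ∈ Icc 1 m, x k ⬝ᵥ ((lasecD d b c x k)⁻¹ *ᵥ x k)
  have hcorr : L ≤ √(Q * S) := Real.le_sqrt_mul_of_forall_two_mul_le fun l _ => by
    have := two_mul_sum_mul_dotProduct_le_lasec x y hb hbc (fun k => l • u k) hm hy hmis
    simp only [Pi.smul_apply, smul_dotProduct, smul_eq_mul, ← mul_sub, mul_pow,
      mul_left_comm (y _) l, ← mul_sum] at this
    linear_combination this
  have hhinge : (m : ℝ) * γ - L ≤ ∑ k ∈ Icc 1 m, hinge d x y γ k (u k) := by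
    have : ∑ k ∈ Icc 1 m, (γ - y k * (u k ⬝ᵥ x k)) = (m : ℝ) * γ - L := by
      simp [L, sum_sub_distrib]
    exact this ▸ sum_le_sum fun k _ => le_max_right _ _
  rw [← mul_add, one_div, le_inv_mul_iff₀ hγ]
  linarith

/-- Theorem 1, LASEC mistake bound: if all `m` rounds are mistaken rounds
of LASEC, then
`m ≤ (1/γ) Σℓ_{γ,k}(u_k) + (1/γ)√((b‖u_1‖² + cV_m + Σ(u_kᵀx_k)²)·Σ x_kᵀD_k⁻¹x_k)`. -/
theorem lasec_mistake_bound (d : ℕ) (hd : 1 ≤ d) (b c : ℝ) (hb : 0 < b) (hbc : b < c)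
    (m : ℕ) (hm : 1 ≤ m) (x : ℕ → Fin d → ℝ) (y : ℕ → ℝ)
    (hy : ∀ k ∈ Icc 1 m, y k = -1 ∨ y k = 1)
    (hmis : ∀ k ∈ Icc 1 m, y k * lasecPhat d b c x y k ≤ 0)
    (γ : ℝ) (hγ : 0 < γ) (u : ℕ → Fin d → ℝ) :
    (m : ℝ) ≤ (1 / γ) * ∑ k ∈ Icc 1 m, hinge d x y γ k (u k)
      + (1 / γ) * Real.sqrt
          ((b * (∑ i, (u 1 i) ^ 2)
              + c * ∑ k ∈ Icc 2 m, ∑ i, (u k i - u (k - 1) i) ^ 2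
              + ∑ k ∈ Icc 1 m, (u k ⬝ᵥ x k) ^ 2)
            * ∑ k ∈ Icc 1 m, x k ⬝ᵥ ((lasecD d b c x k)⁻¹ *ᵥ x k)) :=
  lasec_mistake_bound_general d b c hb hbc m hm x y hy hmis γ hγ u
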